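/- arXiv:2605.09831 — 3 statements merged into one kernel-verified Lean document; each statement's English description precedes it below -/
import Mathlib

section
/- Let T > 0 and let x : [0, T] → 𝒳_s be absolutely continuous with x′(t) ∈ 𝒱(x(t)) for almost every t ∈ [0, T] and with x(0) in the interior of 𝒳_s. Then the function z(t) = σ(x(t)) = Σ_i x_i(t) is absolutely continuous with values in [0,1] and satisfies z′(t) ∈ 𝒳(z(t)) for almost every t ∈ [0, T]; that is, z is a solution of the abstract imitation dynamics on [0, T] with initial value σ(x(0)). -/
open scoped Classical
open MeasureTheory Filter Set

/-- The state space `ℝ^p`, with the Euclidean norm. -/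
abbrev Vec (p : ℕ) := EuclideanSpace ℝ (Fin p)

/-- Maximum of finitely many polynomial utilities at `y`. -/
noncomputable def ubar {p : ℕ} (u : Fin p → Polynomial ℝ) (y : ℝ) : ℝ :=
  ⨆ i, (u i).eval y

/-- The total proportion of `A`-players: `σ(x) = Σ_i x_i`. -/
noncomputable def sigma' {p : ℕ} (x : Vec p) : ℝ := ∑ i, x i

/-- The state space `𝒳_s = ∏_i [0, ρ_i]`. -/
def Xs {p : ℕ} (ρ : Vec p) : Set (Vec p) := {x | ∀ i, x i ∈ Set.Icc 0 (ρ i)}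

/-- The set-valued map of the continuous-time imitation population dynamics. -/
noncomputable def Vmap {p : ℕ} (ρ : Vec p) (uA uB : Fin p → Polynomial ℝ)
    (x : Vec p) : Set (Vec p) :=
  if x ∈ interior (Xs ρ) ∧ ubar uB (sigma' x) < ubar uA (sigma' x) then {ρ - x}
  else if x ∈ interior (Xs ρ) ∧ ubar uA (sigma' x) < ubar uB (sigma' x) then {-x}
  else segment ℝ (ρ - x) (-x)

/-- A Carathéodory solution of the continuous-time imitation population dynamics on `[0,∞)`:
a locally absolutely continuous `𝒳_s`-valued function whose derivative lies in `Vmap`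
almost everywhere, expressed in integral form. -/
def IsPopSol {p : ℕ} (ρ : Vec p) (uA uB : Fin p → Polynomial ℝ) (x : ℝ → Vec p) : Prop :=
  (∀ t, 0 ≤ t → x t ∈ Xs ρ) ∧
  ∃ v : ℝ → Vec p,
    (∀ᵐ t ∂(MeasureTheory.volume.restrict (Set.Ici (0:ℝ))), v t ∈ Vmap ρ uA uB (x t)) ∧
    (∀ t, 0 ≤ t → IntervalIntegrable v MeasureTheory.volume 0 t) ∧
    (∀ t, 0 ≤ t → x t = x 0 + ∫ s in (0:ℝ)..t, v s)

/-- The set-valued map of the abstract imitation dynamics. -/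
noncomputable def Xset {p : ℕ} (uA uB : Fin p → Polynomial ℝ) (z : ℝ) : Set ℝ :=
  if ubar uB z < ubar uA z then {1 - z}
  else if ubar uA z < ubar uB z then {-z}
  else Set.Icc (-z) (1 - z)

/-! Every admissible velocity lies on the segment `[ρ - x, -x]`, so along a solution
`-x_i ≤ x_i' ≤ ρ_i - x_i`. By Gronwall, `x_i(t) ≥ x_i(0) e^{-t}` and
`ρ_i - x_i(t) ≥ (ρ_i - x_i(0)) e^{-t}`, so a solution starting in the interior of `𝒳_s` stays
there. In the interior `𝒱(x)` is decided by the sign of `ūA - ūB` at `σ(x)` alone, and the linear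
map `σ` (with `σ(ρ) = 1`) sends it into `𝒳(σ(x))`; being linear, `σ` also commutes with the
integral form of the solution. -/

theorem mul_exp_neg_le_of_neg_le {y g : ℝ → ℝ} {T : ℝ}
    (hg : IntervalIntegrable g volume 0 T)
    (hy : ∀ t ∈ Icc 0 T, y t = y 0 + ∫ s in (0:ℝ)..t, g s)
    (hgy : ∀ᵐ s ∂volume.restrict (Icc 0 T), -y s ≤ g s) :
    ∀ t ∈ Icc 0 T, y 0 * Real.exp (-t) ≤ y t := by
  intro t ht
  set F : ℝ → ℝ := fun s => y 0 + ∫ r in (0:ℝ)..s, g r with hF_def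
  have hsub : uIcc 0 t ⊆ uIcc 0 T := uIcc_subset_uIcc left_mem_uIcc (Icc_subset_uIcc ht)
  have hF_ac : AbsolutelyContinuousOnInterval F 0 t :=
    (contDiffOn_const.absolutelyContinuousOnInterval.add
      (hg.absolutelyContinuousOnInterval_intervalIntegral (by simp))).mono hsub
  have hexpF_ac : AbsolutelyContinuousOnInterval (fun s => Real.exp s * F s) 0 t :=
    Real.contDiff_exp.contDiffOn.absolutelyContinuousOnInterval.fun_mul hF_ac
  have hderiv : ∀ᵐ s ∂volume.restrict (Icc 0 t),
      deriv (fun s => Real.exp s * F s) s = Real.exp s * (y s + g s) := by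
    have hFderiv := ae_restrict_of_ae (μ := volume) (s := Icc 0 t) hg.ae_hasDerivAt_integral
    filter_upwards [hFderiv, ae_restrict_mem measurableSet_Icc] with s hs hst
    have hsT : s ∈ Icc 0 T := ⟨hst.1, hst.2.trans ht.2⟩
    have := ((hs (hsub (Icc_subset_uIcc hst)) 0 (by simp)).const_add (y 0))
    rw [((Real.hasDerivAt_exp s).fun_mul this).deriv, hy s hsT]
    ring
  have hmono : 0 ≤ ∫ s in (0:ℝ)..t, deriv (fun s => Real.exp s * F s) s := by
    refine intervalIntegral.integral_nonneg_of_ae_restrict ht.1 ?_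
    filter_upwards [hderiv, ae_restrict_of_ae_restrict_of_subset (Icc_subset_Icc_right ht.2) hgy]
      with s hs hgs
    rw [Pi.zero_apply, hs]
    exact mul_nonneg (Real.exp_pos s).le (by linarith)
  rw [hexpF_ac.integral_deriv_eq_sub] at hmono
  simp only [hF_def, intervalIntegral.integral_same, add_zero, Real.exp_zero, one_mul,
    ← hy t ht] at hmono
  rw [Real.exp_neg, ← div_eq_mul_inv, div_le_iff₀ (Real.exp_pos t)]
  linarith

section IntegralForm

variable {E F : Type*} [NormedAddCommGroup E] [NormedSpace ℝ E]
  [NormedAddCommGroup F] [NormedSpace ℝ F]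

lemma IntervalIntegrable.continuousLinearMap_comp {v : ℝ → E} {a b : ℝ}
    (hv : IntervalIntegrable v volume a b) (L : E →L[ℝ] F) :
    IntervalIntegrable (fun s => L (v s)) volume a b :=
  ⟨L.integrable_comp hv.1, L.integrable_comp hv.2⟩

lemma ContinuousLinearMap.apply_eq_add_intervalIntegral_comp [CompleteSpace E] [CompleteSpace F]
    (L : E →L[ℝ] F) {x v : ℝ → E} {T : ℝ} (hv : IntervalIntegrable v volume 0 T)
    (hx : ∀ t ∈ Icc 0 T, x t = x 0 + ∫ s in (0:ℝ)..t, v s) :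
    ∀ t ∈ Icc 0 T, L (x t) = L (x 0) + ∫ s in (0:ℝ)..t, L (v s) := by
  intro t ht
  have hvt : IntervalIntegrable v volume 0 t :=
    hv.mono_set (uIcc_subset_uIcc left_mem_uIcc (Icc_subset_uIcc ht))
  rw [hx t ht, map_add, L.intervalIntegral_comp_comm hvt]

lemma ContinuousLinearMap.mem_Icc_of_mem_segment_sub_neg (L : E →L[ℝ] ℝ) {r x w : E}
    (hr : 0 ≤ L r) (hw : w ∈ segment ℝ (r - x) (-x)) : L w ∈ Icc (-L x) (L r - L x) := by
  obtain ⟨a, b, ha, hb, hab, rfl⟩ := hw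
  have hLw : L (a • (r - x) + b • -x) = a * L r - L x := by
    simp only [map_add, map_smul, map_sub, map_neg, smul_eq_mul]
    linear_combination (-L x) * hab
  rw [hLw]
  constructor
  · nlinarith [mul_nonneg ha hr]
  · nlinarith [mul_nonneg hb hr]

end IntegralForm

lemma mem_interior_Xs {p : ℕ} {ρ x : Vec p} :
    x ∈ interior (Xs ρ) ↔ ∀ i, x i ∈ Ioo 0 (ρ i) := by
  have hXs : Xs ρ = PiLp.homeomorph 2 (fun _ : Fin p => ℝ) ⁻¹' univ.pi fun i => Icc 0 (ρ i) := by
    ext y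
    simp only [Xs, mem_ofPred_eq, mem_preimage, mem_univ_pi]
    rfl
  rw [hXs, ← Homeomorph.preimage_interior, interior_pi_set finite_univ]
  simp only [interior_Icc, mem_preimage, mem_univ_pi]
  rfl

lemma mem_interior_Xs_of_mem_segment {p : ℕ} {ρ : Vec p} {T : ℝ} {x v : ℝ → Vec p}
    (hv : ∀ᵐ t ∂volume.restrict (Icc 0 T), v t ∈ segment ℝ (ρ - x t) (-x t))
    (hvint : IntervalIntegrable v volume 0 T)
    (hxeq : ∀ t ∈ Icc 0 T, x t = x 0 + ∫ s in (0:ℝ)..t, v s)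
    (hx0 : x 0 ∈ interior (Xs ρ)) :
    ∀ t ∈ Icc 0 T, x t ∈ interior (Xs ρ) := by
  intro t ht
  refine mem_interior_Xs.2 fun i => ?_
  obtain ⟨hx0_pos, hx0_lt⟩ := mem_interior_Xs.1 hx0 i
  let πᵢ := EuclideanSpace.proj (𝕜 := ℝ) (ι := Fin p) i
  have hvi : IntervalIntegrable (fun s => v s i) volume 0 T := hvint.continuousLinearMap_comp πᵢ
  have hxi : ∀ t ∈ Icc 0 T, x t i = x 0 i + ∫ s in (0:ℝ)..t, v s i :=
    πᵢ.apply_eq_add_intervalIntegral_comp hvint hxeq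
  have hbounds : ∀ᵐ s ∂volume.restrict (Icc 0 T), v s i ∈ Icc (-x s i) (ρ i - x s i) :=
    hv.mono fun s hs => πᵢ.mem_Icc_of_mem_segment_sub_neg (hx0_pos.trans hx0_lt).le hs
  have hlower : x 0 i * Real.exp (-t) ≤ x t i :=
    mul_exp_neg_le_of_neg_le hvi hxi (hbounds.mono fun s hs => hs.1) t ht
  have hupper : (ρ i - x 0 i) * Real.exp (-t) ≤ ρ i - x t i := by
    refine mul_exp_neg_le_of_neg_le (y := fun t => ρ i - x t i) (g := fun s => -v s i) hvi.neg
      (fun t ht => ?_) (hbounds.mono fun s hs => by linarith [hs.2]) t ht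
    rw [intervalIntegral.integral_neg, hxi t ht]
    ring
  constructor
  · exact (mul_pos hx0_pos (Real.exp_pos _)).trans_le hlower
  · linarith [mul_pos (sub_pos.2 hx0_lt) (Real.exp_pos (-t))]

lemma Vmap_subset_segment {p : ℕ} (ρ : Vec p) (uA uB : Fin p → Polynomial ℝ) (x : Vec p) :
    Vmap ρ uA uB x ⊆ segment ℝ (ρ - x) (-x) := by
  unfold Vmap
  split_ifs
  · exact singleton_subset_iff.2 (left_mem_segment ℝ _ _)
  · exact singleton_subset_iff.2 (right_mem_segment ℝ _ _)
  · exact subset_rfl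

noncomputable def sigmaCLM (p : ℕ) : Vec p →L[ℝ] ℝ := ∑ i, EuclideanSpace.proj i

lemma sigmaCLM_apply {p : ℕ} (x : Vec p) : sigmaCLM p x = sigma' x := by
  simp [sigmaCLM, sigma']

lemma sigma'_mem_Xset_of_mem_Vmap {p : ℕ} {ρ : Vec p} (hsum : ∑ i, ρ i = 1)
    {uA uB : Fin p → Polynomial ℝ} {x w : Vec p} (hx : x ∈ interior (Xs ρ))
    (hw : w ∈ Vmap ρ uA uB x) : sigma' w ∈ Xset uA uB (sigma' x) := by
  have hρ : sigma' ρ = 1 := hsum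
  unfold Vmap at hw
  unfold Xset
  rcases lt_trichotomy (ubar uB (sigma' x)) (ubar uA (sigma' x)) with hBA | hEq | hAB
  · rw [if_pos ⟨hx, hBA⟩, mem_singleton_iff] at hw
    rw [if_pos hBA, mem_singleton_iff, hw, ← sigmaCLM_apply, map_sub, sigmaCLM_apply,
      sigmaCLM_apply, hρ]
  · rw [if_neg fun h => hEq.not_lt h.2, if_neg fun h => hEq.not_gt h.2] at hw
    rw [if_neg hEq.not_lt, if_neg hEq.not_gt]
    simpa only [sigmaCLM_apply, hρ] using (sigmaCLM p).mem_Icc_of_mem_segment_sub_neg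
      (by rw [sigmaCLM_apply, hρ]; exact zero_le_one) hw
  · rw [if_neg fun h => lt_asymm hAB h.2, if_pos ⟨hx, hAB⟩, mem_singleton_iff] at hw
    rw [if_neg (lt_asymm hAB), if_pos hAB, mem_singleton_iff, hw, ← sigmaCLM_apply, map_neg,
      sigmaCLM_apply]

lemma sigma'_mem_Icc_of_mem_Xs {p : ℕ} {ρ x : Vec p} (hsum : ∑ i, ρ i = 1) (hx : x ∈ Xs ρ) :
    sigma' x ∈ Icc 0 1 :=
  ⟨Finset.sum_nonneg fun i _ => (hx i).1, hsum ▸ Finset.sum_le_sum fun i _ => (hx i).2⟩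

theorem sum_of_solution_solves_abstract_dynamics_general
    {p : ℕ} (ρ : Vec p) (hsum : ∑ i, ρ i = 1)
    (uA uB : Fin p → Polynomial ℝ)
    (T : ℝ) (x v : ℝ → Vec p)
    (hv : ∀ᵐ t ∂(MeasureTheory.volume.restrict (Set.Icc (0:ℝ) T)),
      v t ∈ Vmap ρ uA uB (x t))
    (hvint : IntervalIntegrable v MeasureTheory.volume 0 T)
    (hxeq : ∀ t ∈ Set.Icc (0:ℝ) T, x t = x 0 + ∫ s in (0:ℝ)..t, v s)
    (hx0 : x 0 ∈ interior (Xs ρ)) :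
    (∀ t ∈ Set.Icc (0:ℝ) T, sigma' (x t) ∈ Set.Icc (0:ℝ) 1) ∧
    ∃ w : ℝ → ℝ,
      (∀ᵐ t ∂(MeasureTheory.volume.restrict (Set.Icc (0:ℝ) T)),
        w t ∈ Xset uA uB (sigma' (x t))) ∧
      IntervalIntegrable w MeasureTheory.volume 0 T ∧
      (∀ t ∈ Set.Icc (0:ℝ) T, sigma' (x t) = sigma' (x 0) + ∫ s in (0:ℝ)..t, w s) := by
  have hinterior : ∀ t ∈ Icc 0 T, x t ∈ interior (Xs ρ) :=
    mem_interior_Xs_of_mem_segment (hv.mono fun t => (Vmap_subset_segment ρ uA uB (x t) ·))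
      hvint hxeq hx0
  refine ⟨fun t ht => sigma'_mem_Icc_of_mem_Xs hsum (interior_subset (hinterior t ht)),
    fun s => sigma' (v s), ?_, ?_, ?_⟩
  · filter_upwards [hv, ae_restrict_mem measurableSet_Icc] with t hvt ht
    exact sigma'_mem_Xset_of_mem_Vmap hsum (hinterior t ht) hvt
  · simpa only [sigmaCLM_apply] using hvint.continuousLinearMap_comp (sigmaCLM p)
  · simpa only [sigmaCLM_apply] using (sigmaCLM p).apply_eq_add_intervalIntegral_comp hvint hxeq

theorem sum_of_solution_solves_abstract_dynamics
    {p : ℕ} (hp : 0 < p) (ρ : Vec p) (hρ : ∀ i, 0 < ρ i) (hsum : ∑ i, ρ i = 1)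
    (uA uB : Fin p → Polynomial ℝ)
    (T : ℝ) (hT : 0 < T) (x v : ℝ → Vec p)
    (hxmem : ∀ t ∈ Set.Icc (0:ℝ) T, x t ∈ Xs ρ)
    (hv : ∀ᵐ t ∂(MeasureTheory.volume.restrict (Set.Icc (0:ℝ) T)),
      v t ∈ Vmap ρ uA uB (x t))
    (hvint : IntervalIntegrable v MeasureTheory.volume 0 T)
    (hxeq : ∀ t ∈ Set.Icc (0:ℝ) T, x t = x 0 + ∫ s in (0:ℝ)..t, v s)
    (hx0 : x 0 ∈ interior (Xs ρ)) :
    (∀ t ∈ Set.Icc (0:ℝ) T, sigma' (x t) ∈ Set.Icc (0:ℝ) 1) ∧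
    ∃ w : ℝ → ℝ,
      (∀ᵐ t ∂(MeasureTheory.volume.restrict (Set.Icc (0:ℝ) T)),
        w t ∈ Xset uA uB (sigma' (x t))) ∧
      IntervalIntegrable w MeasureTheory.volume 0 T ∧
      (∀ t ∈ Set.Icc (0:ℝ) T, sigma' (x t) = sigma' (x 0) + ∫ s in (0:ℝ)..t, w s) :=
  sum_of_solution_solves_abstract_dynamics_general ρ hsum uA uB T x v hv hvint hxeq hx0
end

section
/- Let T > 0 and let x : [0, T] → 𝒳_s be absolutely continuous with x′(t) ∈ 𝒱(x(t)) for almost every t ∈ [0, T] and with 0 < x_i(0) < ρ_i for every i. Then 0 < x_i(t) < ρ_i for every i and every t ∈ [0, T]; that is, a Carathéodory solution starting in the interior of 𝒳_s remains in the interior of 𝒳_s on any finite time horizon. -/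
open scoped Classical
open MeasureTheory Filter Set

/-- In every case of `Vmap`, an admissible velocity `w` at a state `y ∈ 𝒳_s` satisfies
the coordinatewise bounds `-(y i) ≤ w i ≤ ρ i - y i`. -/
lemma vmap_coord_bound {p : ℕ} (ρ : Vec p) (hρ : ∀ i, 0 < ρ i)
    (uA uB : Fin p → Polynomial ℝ) {y w : Vec p} (hy : y ∈ Xs ρ)
    (hw : w ∈ Vmap ρ uA uB y) (i : Fin p) :
    -(y i) ≤ w i ∧ w i ≤ ρ i - y i := by
  have hyi := hy i
  have h1 : (0:ℝ) ≤ ρ i := (hρ i).le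
  have hy1 : (0:ℝ) ≤ y i := hyi.1
  have hy2 : y i ≤ ρ i := hyi.2
  unfold Vmap at hw
  split_ifs at hw with h h
  · rw [Set.mem_singleton_iff] at hw
    subst hw
    have : (ρ - y) i = ρ i - y i := rfl
    rw [this]
    constructor <;> linarith
  · rw [Set.mem_singleton_iff] at hw
    subst hw
    have : (-y) i = -(y i) := rfl
    rw [this]
    constructor <;> linarith
  · obtain ⟨a, b, ha, hb, hab, rfl⟩ := hw
    have hcoord : (a • (ρ - y) + b • (-y)) i = a * (ρ i - y i) + b * (-(y i)) := rfl
    rw [hcoord]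
    constructor
    · nlinarith [mul_nonneg ha h1]
    · nlinarith [mul_nonneg hb h1]

/-- Gronwall-type positivity lemma (via Picard iteration bounds): if `f` is given in
integral form `f s = f 0 + ∫₀ˢ g`, with `g ≥ -f` a.e. on `[0,T]`, `f ≤ M` on `[0,T]`,
and `f 0 > 0`, then `f` stays positive on `[0,T]`. -/
lemma key_pos (M : ℝ) (f g : ℝ → ℝ) (T : ℝ) (hT : 0 ≤ T)
    (hfM : ∀ s ∈ Set.Icc (0:ℝ) T, f s ≤ M)
    (hgint : IntervalIntegrable g MeasureTheory.volume 0 T)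
    (heq : ∀ s ∈ Set.Icc (0:ℝ) T, f s = f 0 + ∫ u in (0:ℝ)..s, g u)
    (hge : ∀ᵐ s ∂(MeasureTheory.volume.restrict (Set.Icc (0:ℝ) T)), -f s ≤ g s)
    (hf0 : 0 < f 0) :
    ∀ t ∈ Set.Icc (0:ℝ) T, 0 < f t := by
  have hgsub : ∀ s ∈ Set.Icc (0:ℝ) T, IntervalIntegrable g MeasureTheory.volume 0 s := by
    intro s hs
    exact hgint.mono_set (by
      rw [uIcc_of_le hs.1, uIcc_of_le hT]
      exact Icc_subset_Icc le_rfl hs.2)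
  have hfcont : ContinuousOn f (Set.Icc 0 T) := by
    have h1 : ContinuousOn (fun s => f 0 + ∫ u in (0:ℝ)..s, g u) (Set.Icc 0 T) := by
      apply ContinuousOn.add continuousOn_const
      have h2 : IntegrableOn g (Set.uIcc (0:ℝ) T) MeasureTheory.volume := by
        rw [uIcc_of_le hT]
        exact (intervalIntegrable_iff_integrableOn_Icc_of_le hT).mp hgint
      have := intervalIntegral.continuousOn_primitive_interval h2
      rwa [uIcc_of_le hT] at this
    exact h1.congr heq
  intro t ht
  by_contra hft
  push_neg at hft
  have hfintIcc : ∀ s ∈ Set.Icc (0:ℝ) t, IntervalIntegrable f MeasureTheory.volume s t := by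
    intro s hs
    apply ContinuousOn.intervalIntegrable
    apply hfcont.mono
    rw [uIcc_of_le hs.2]
    exact Icc_subset_Icc hs.1 ht.2
  have hkey : ∀ s ∈ Set.Icc (0:ℝ) t, f s ≤ ∫ u in s..t, f u := by
    intro s hs
    have hs' : s ∈ Set.Icc (0:ℝ) T := ⟨hs.1, hs.2.trans ht.2⟩
    have hgs := hgsub s hs'
    have hgt := hgsub t ht
    have hst : IntervalIntegrable g MeasureTheory.volume s t := hgs.symm.trans hgt
    have hfint := hfintIcc s hs
    have h1 : f t - f s = ∫ u in s..t, g u := by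
      rw [heq t ht, heq s hs']
      rw [show (f 0 + ∫ u in (0:ℝ)..t, g u) - (f 0 + ∫ u in (0:ℝ)..s, g u)
            = (∫ u in (0:ℝ)..t, g u) - ∫ u in (0:ℝ)..s, g u by ring]
      exact intervalIntegral.integral_interval_sub_left hgt hgs
    have hmono : ∫ u in s..t, (-f u) ≤ ∫ u in s..t, g u := by
      apply intervalIntegral.integral_mono_ae_restrict hs.2 hfint.neg hst
      exact ae_restrict_of_ae_restrict_of_subset (Icc_subset_Icc hs.1 ht.2) hge
    rw [intervalIntegral.integral_neg] at hmono
    linarith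
  have hMn : ∀ n : ℕ, ∀ s ∈ Set.Icc (0:ℝ) t, f s ≤ M * (t - s) ^ n / n.factorial := by
    intro n
    induction n with
    | zero =>
      intro s hs
      simpa using hfM s ⟨hs.1, hs.2.trans ht.2⟩
    | succ n ih =>
      intro s hs
      have hfint := hfintIcc s hs
      have hcontpoly : Continuous (fun u : ℝ => M * (t - u) ^ n / n.factorial) :=
        (continuous_const.mul ((continuous_const.sub continuous_id).pow n)).div_const _
      have h2 : ∫ u in s..t, f u ≤ ∫ u in s..t, M * (t - u) ^ n / n.factorial := by
        apply intervalIntegral.integral_mono_on hs.2 hfint (hcontpoly.intervalIntegrable _ _)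
        intro u hu
        exact ih u ⟨hs.1.trans hu.1, hu.2⟩
      have h3 : ∫ u in s..t, M * (t - u) ^ n / n.factorial
          = M * (t - s) ^ (n + 1) / (n + 1).factorial := by
        have hrw : ∀ u : ℝ, M * (t - u) ^ n / n.factorial
            = (M / n.factorial) * (t - u) ^ n := fun u => by ring
        simp_rw [hrw]
        rw [intervalIntegral.integral_const_mul]
        rw [intervalIntegral.integral_comp_sub_left (fun u : ℝ => u ^ n) t]
        rw [integral_pow, sub_self, zero_pow (Nat.succ_ne_zero n)]
        have hfac : ((n + 1).factorial : ℝ) = (n + 1) * n.factorial := by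
          push_cast [Nat.factorial_succ]; ring
        rw [hfac]
        rw [sub_zero, div_mul_div_comm, mul_comm ((n.factorial : ℝ)) ((n : ℝ) + 1)]
      have := hkey s hs
      linarith
  have h0t : (0:ℝ) ∈ Set.Icc (0:ℝ) t := ⟨le_refl _, ht.1⟩
  have hlim : Tendsto (fun n : ℕ => M * t ^ n / n.factorial) atTop (nhds 0) := by
    have h1 := (FloorSemiring.tendsto_pow_div_factorial_atTop (K := ℝ) t).const_mul M
    rw [mul_zero] at h1
    simpa [mul_div_assoc] using h1
  have hle : f 0 ≤ 0 := by
    refine ge_of_tendsto hlim (Eventually.of_forall fun n => ?_)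
    simpa using hMn n 0 h0t
  linarith

theorem interior_invariance_finite_horizon
    {p : ℕ} (hp : 0 < p) (ρ : Vec p) (hρ : ∀ i, 0 < ρ i) (hsum : ∑ i, ρ i = 1)
    (uA uB : Fin p → Polynomial ℝ)
    (T : ℝ) (hT : 0 < T) (x v : ℝ → Vec p)
    (hxmem : ∀ t ∈ Set.Icc (0:ℝ) T, x t ∈ Xs ρ)
    (hv : ∀ᵐ t ∂(MeasureTheory.volume.restrict (Set.Icc (0:ℝ) T)),
      v t ∈ Vmap ρ uA uB (x t))
    (hvint : IntervalIntegrable v MeasureTheory.volume 0 T)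
    (hxeq : ∀ t ∈ Set.Icc (0:ℝ) T, x t = x 0 + ∫ s in (0:ℝ)..t, v s)
    (hx0 : ∀ i, 0 < x 0 i ∧ x 0 i < ρ i) :
    ∀ t ∈ Set.Icc (0:ℝ) T, ∀ i, 0 < x t i ∧ x t i < ρ i := by
  intro t ht i
  have hT0 : (0:ℝ) ≤ T := hT.le
  have hvb : ∀ᵐ s ∂(MeasureTheory.volume.restrict (Set.Icc (0:ℝ) T)),
      -(x s i) ≤ v s i ∧ v s i ≤ ρ i - x s i := by
    filter_upwards [hv, ae_restrict_mem measurableSet_Icc] with s hs hsmem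
    exact vmap_coord_bound ρ hρ uA uB (hxmem s hsmem) hs i
  have hgint : IntervalIntegrable (fun s => v s i) MeasureTheory.volume 0 T :=
    ⟨(EuclideanSpace.proj (𝕜 := ℝ) i).integrable_comp hvint.1,
     (EuclideanSpace.proj (𝕜 := ℝ) i).integrable_comp hvint.2⟩
  have hcoord : ∀ s ∈ Set.Icc (0:ℝ) T, x s i = x 0 i + ∫ u in (0:ℝ)..s, v u i := by
    intro s hs
    have h2 : IntervalIntegrable v MeasureTheory.volume 0 s :=
      hvint.mono_set (by
        rw [uIcc_of_le hs.1, uIcc_of_le hT0]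
        exact Icc_subset_Icc le_rfl hs.2)
    have h3 := (EuclideanSpace.proj (𝕜 := ℝ) i).intervalIntegral_comp_comm h2
    have h4 := congrArg (EuclideanSpace.proj (𝕜 := ℝ) i) (hxeq s hs)
    rw [map_add] at h4
    rw [← h3] at h4
    simpa using h4
  have hlow : 0 < x t i := by
    refine key_pos (ρ i) (fun s => x s i) (fun s => v s i) T hT0
      (fun s hs => (hxmem s hs i).2) hgint hcoord ?_ (hx0 i).1 t ht
    filter_upwards [hvb] with s hs using hs.1
  have hup : 0 < ρ i - x t i := by
    refine key_pos (ρ i) (fun s => ρ i - x s i) (fun s => -(v s i)) T hT0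
      (fun s hs => by show ρ i - x s i ≤ ρ i; linarith [(hxmem s hs i).1]) hgint.neg ?_ ?_
      (by show (0:ℝ) < ρ i - x 0 i; linarith [(hx0 i).2]) t ht
    · intro s hs
      show ρ i - x s i = (ρ i - x 0 i) + ∫ u in (0:ℝ)..s, -(v u i)
      have h := hcoord s hs
      rw [intervalIntegral.integral_neg]
      linarith
    · filter_upwards [hvb] with s hs
      show -(ρ i - x s i) ≤ -(v s i)
      linarith [hs.2]
  exact ⟨hlow, by linarith⟩
end

section
/- For every x ∈ 𝒳_s, the vector ν(x) := (2 − s(x))ρ − x belongs to 𝒱(x); that is, the expected-increment field of the imitation update rule is a selection of the set-valued map 𝒱 defining the continuous-time imitation population dynamics. -/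
open scoped Classical
open MeasureTheory Filter Set

/-- `u^A(x)`: the maximum `A`-utility over the types with at least one `A`-player
(`−∞` if there is none, i.e. if `x = 0`). -/
noncomputable def uAofx {p : ℕ} (uA : Fin p → Polynomial ℝ) (x : Vec p) : EReal :=
  ⨆ i : {i : Fin p // 0 < x i}, (((uA i.1).eval (sigma' x) : ℝ) : EReal)

/-- `u^B(x)`: the maximum `B`-utility over the types with at least one `B`-player
(`−∞` if there is none, i.e. if `x = ρ`). -/
noncomputable def uBofx {p : ℕ} (uB : Fin p → Polynomial ℝ) (ρ x : Vec p) : EReal :=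
  ⨆ i : {i : Fin p // x i < ρ i}, (((uB i.1).eval (sigma' x) : ℝ) : EReal)

/-- The switching rule: `s(x) = 1` if `u^A(x) ≥ u^B(x)`, and `s(x) = 2` otherwise. -/
noncomputable def sfun {p : ℕ} (uA uB : Fin p → Polynomial ℝ) (ρ x : Vec p) : ℝ :=
  if uBofx uB ρ x ≤ uAofx uA x then 1 else 2


lemma mem_Ioo_of_interior {p : ℕ} (ρ : Vec p) {x : Vec p}
    (hx : x ∈ interior (Xs ρ)) (i : Fin p) : x i ∈ Set.Ioo 0 (ρ i) := by
  obtain ⟨ε, hε, hball⟩ := Metric.mem_nhds_iff.1 (mem_interior_iff_mem_nhds.1 hx)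
  have hdist : ∀ c : ℝ, |c| < ε → (x + c • EuclideanSpace.single i (1:ℝ)) ∈ Xs ρ := by
    intro c hc
    apply hball
    have : dist (x + c • EuclideanSpace.single i (1:ℝ)) x = |c| := by
      rw [dist_eq_norm]
      simp [norm_smul, EuclideanSpace.norm_single]
    simpa [Metric.mem_ball, this] using hc
  constructor
  · have h1 := (hdist (-(ε/2)) (by rw [abs_neg, abs_of_pos (by linarith)]; linarith)) i |>.1
    have : (x + (-(ε/2)) • EuclideanSpace.single i (1:ℝ)) i = x i - ε/2 := by
      simp [EuclideanSpace.single_apply]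
      ring
    rw [this] at h1
    linarith
  · have h1 := (hdist (ε/2) (by rw [abs_of_pos (by linarith)]; linarith)) i |>.2
    have : (x + (ε/2) • EuclideanSpace.single i (1:ℝ)) i = x i + ε/2 := by
      simp [EuclideanSpace.single_apply]
    rw [this] at h1
    linarith

theorem expected_increment_is_selection
    {p : ℕ} (hp : 0 < p) (ρ : Vec p) (hρ : ∀ i, 0 < ρ i) (hsum : ∑ i, ρ i = 1)
    (uA uB : Fin p → Polynomial ℝ) :
    ∀ x ∈ Xs ρ, ((2 - sfun uA uB ρ x) • ρ - x) ∈ Vmap ρ uA uB x := by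
  intro x hx
  have hne : Nonempty (Fin p) := ⟨⟨0, hp⟩⟩
  unfold Vmap
  split_ifs with h1 h2
  · obtain ⟨hint, hlt⟩ := h1
    have hio := fun i => mem_Ioo_of_interior ρ hint i
    obtain ⟨i0, hi0⟩ := exists_eq_ciSup_of_finite (f := fun i => (uA i).eval (sigma' x))
    have hs : sfun uA uB ρ x = 1 := by
      unfold sfun
      rw [if_pos]
      calc uBofx uB ρ x ≤ ((ubar uB (sigma' x) : ℝ) : EReal) := by
            apply iSup_le
            intro j
            have := le_ciSup (f := fun i => (uB i).eval (sigma' x))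
              (Set.Finite.bddAbove (Set.finite_range _)) j.1
            exact_mod_cast this
        _ ≤ ((ubar uA (sigma' x) : ℝ) : EReal) := by exact_mod_cast hlt.le
        _ = (((uA i0).eval (sigma' x) : ℝ) : EReal) := by rw [ubar, ← hi0]
        _ ≤ uAofx uA x :=
            le_iSup (fun j : {i : Fin p // 0 < x i} =>
              (((uA j.1).eval (sigma' x) : ℝ) : EReal)) ⟨i0, (hio i0).1⟩
    rw [hs]
    norm_num
  · obtain ⟨hint, hlt⟩ := h2
    have hio := fun i => mem_Ioo_of_interior ρ hint i
    obtain ⟨i0, hi0⟩ := exists_eq_ciSup_of_finite (f := fun i => (uB i).eval (sigma' x))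
    have hs : sfun uA uB ρ x = 2 := by
      unfold sfun
      rw [if_neg]
      rw [not_le]
      calc uAofx uA x ≤ ((ubar uA (sigma' x) : ℝ) : EReal) := by
            apply iSup_le
            intro j
            have := le_ciSup (f := fun i => (uA i).eval (sigma' x))
              (Set.Finite.bddAbove (Set.finite_range _)) j.1
            exact_mod_cast this
        _ < ((ubar uB (sigma' x) : ℝ) : EReal) := by exact_mod_cast hlt
        _ = (((uB i0).eval (sigma' x) : ℝ) : EReal) := by rw [ubar, ← hi0]
        _ ≤ uBofx uB ρ x :=
            le_iSup (fun j : {i : Fin p // x i < ρ i} =>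
              (((uB j.1).eval (sigma' x) : ℝ) : EReal)) ⟨i0, (hio i0).2⟩
    rw [hs]
    norm_num
  · unfold sfun
    split_ifs
    · have : ((2:ℝ) - 1) • ρ - x = ρ - x := by norm_num
      rw [this]
      exact left_mem_segment ℝ _ _
    · have : ((2:ℝ) - 2) • ρ - x = -x := by
        norm_num
      rw [this]
      exact right_mem_segment ℝ _ _
end
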